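/- Let a, b, c, d be affinely independent points of EuclideanSpace ℝ (Fin 3). Then it is not the case that both ∠ b d c + ∠ a d b > π and ∠ d b c + ∠ a b d > π hold (i.e., face B=cda cannot fail at d while face D=abc fails at b). -/

import Mathlib

open EuclideanGeometry Real

-- In a degenerate triangle an angle with a zero side is `π / 2`, so the bound survives.
theorem EuclideanGeometry.angle_add_angle_le_pi {V P : Type*} [NormedAddCommGroup V]
    [InnerProductSpace ℝ V] [MetricSpace P] [NormedAddTorsor V P] (p₁ p₂ p₃ : P) :
    ∠ p₁ p₂ p₃ + ∠ p₂ p₃ p₁ ≤ π := by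
  by_cases h₂₁ : p₂ = p₁
  · subst h₂₁
    by_cases h₃₂ : p₃ = p₂
    · subst h₃₂
      simp only [angle_self_left]
      linarith
    · rw [angle_self_left, angle_self_of_ne (Ne.symm h₃₂)]
      linarith [pi_pos]
  · linarith [angle_add_angle_add_angle_eq_pi p₃ h₂₁, angle_nonneg p₃ p₁ p₂]

theorem not_opposite_failures_bd_general
    (a b c d : EuclideanSpace ℝ (Fin 3)) :
    ¬ (∠ b d c + ∠ a d b > π ∧ ∠ d b c + ∠ a b d > π) := by
  rintro ⟨hd, hb⟩
  have triangle_bdc := angle_add_angle_le_pi c d b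
  have triangle_abd := angle_add_angle_le_pi a b d
  rw [angle_comm c d b] at triangle_bdc
  rw [angle_comm b d a] at triangle_abd
  linarith

/-- Face `B = cda` cannot fail at `d` while face `D = abc` fails at `b`. -/
theorem not_opposite_failures_bd
    (a b c d : EuclideanSpace ℝ (Fin 3))
    (h : AffineIndependent ℝ ![a, b, c, d]) :
    ¬ (∠ b d c + ∠ a d b > π ∧ ∠ d b c + ∠ a b d > π) :=
  not_opposite_failures_bd_general a b c d
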